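/- arXiv:1707.00205 — 3 statements merged into one kernel-verified Lean document; each statement's English description precedes it below -/
import Mathlib

section
/- For every λ = (λ_1,…,λ_T) ∈ ℝ^T, the Lagrangian relaxation value decomposes as P(λ) = K·Q(λ) + m·∑_{t=1}^T λ_t, where Q(λ) is the optimal value of the single sub-MDP with per-period penalty λ_t for the active action. -/
open Finset

namespace RMAB

/-- Numeric value of an action: the active action `true` counts as `1`. -/
def actVal (a : Bool) : ℝ := if a then 1 else 0

section Core

variable {σ β : Type*} [Fintype σ] [Fintype β] [DecidableEq σ]

/-- A (randomized) Markov policy: `π s a t` is the probability of taking action `a`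
in state `s` at time `t`. -/
def IsPolicy (π : σ → β → ℕ → ℝ) : Prop :=
  (∀ s a t, 0 ≤ π s a t) ∧ ∀ s t, ∑ a : β, π s a t = 1

/-- A transition kernel: `P a s s'` is the probability of moving from `s` to `s'`
when action `a` is taken. -/
def IsKernel (P : β → σ → σ → ℝ) : Prop :=
  (∀ a s s', 0 ≤ P a s s') ∧ ∀ a s, ∑ s' : σ, P a s s' = 1

/-- `saDist P init π t s a` is the probability, under the Markov policy `π` started at
`init`, that at time `t` (1-indexed) the process is in state `s` and takes action `a`. -/
noncomputable def saDist (P : β → σ → σ → ℝ) (init : σ) (π : σ → β → ℕ → ℝ) :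
    ℕ → σ → β → ℝ
  | 0 => fun _ _ => 0
  | 1 => fun s a => (if s = init then (1 : ℝ) else 0) * π s a 1
  | (t + 2) => fun s a =>
      (∑ s' : σ, ∑ a' : β, saDist P init π (t + 1) s' a' * P a' s' s) * π s a (t + 2)

/-- Expected value of `∑_{t=1}^T f t S_t A_t` under the Markov policy `π` started at `init`. -/
noncomputable def expVal (P : β → σ → σ → ℝ) (init : σ) (π : σ → β → ℕ → ℝ)
    (T : ℕ) (f : ℕ → σ → β → ℝ) : ℝ :=
  ∑ t ∈ Finset.Icc 1 T, ∑ s : σ, ∑ a : β, saDist P init π t s a * f t s a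

end Core

section Sub

variable {S : Type*} [Fintype S] [DecidableEq S]

/-- Value of a policy in the sub-MDP with Lagrange penalty `lam t` for the active action. -/
noncomputable def subValue (P : Bool → S → S → ℝ) (s1 : S) (r : ℕ → S → Bool → ℝ)
    (lam : ℕ → ℝ) (T : ℕ) (π : S → Bool → ℕ → ℝ) : ℝ :=
  expVal P s1 π T fun t s a => r t s a - lam t * actVal a

/-- `Q(λ)`: the optimal value of the penalized sub-MDP. -/
noncomputable def Qval (P : Bool → S → S → ℝ) (s1 : S) (r : ℕ → S → Bool → ℝ)
    (T : ℕ) (lam : ℕ → ℝ) : ℝ :=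
  sSup {v | ∃ π : S → Bool → ℕ → ℝ, IsPolicy π ∧ v = subValue P s1 r lam T π}

/-- The transition kernel of the original MDP: `K` arms evolving independently. -/
def jointKernel (P : Bool → S → S → ℝ) (K : ℕ) :
    (Fin K → Bool) → (Fin K → S) → (Fin K → S) → ℝ :=
  fun a s s' => ∏ x, P (a x) (s x) (s' x)

/-- The reward of the original MDP: the sum of the arms' rewards. -/
def jointReward (r : ℕ → S → Bool → ℝ) (K : ℕ) :
    ℕ → (Fin K → S) → (Fin K → Bool) → ℝ :=
  fun t s a => ∑ x, r t (s x) (a x)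

/-- `|a|`: the number of active arms of a joint action. -/
def numActive {K : ℕ} (a : Fin K → Bool) : ℝ := ∑ x, actVal (a x)

/-- Expected total reward of a joint Markov policy in the original MDP with `K` arms,
all started at `s1`. -/
noncomputable def jointValue (P : Bool → S → S → ℝ) (s1 : S) (r : ℕ → S → Bool → ℝ)
    (T K : ℕ) (πb : (Fin K → S) → (Fin K → Bool) → ℕ → ℝ) : ℝ :=
  expVal (jointKernel P K) (fun _ => s1) πb T (jointReward r K)

/-- The Lagrangian relaxation value `P(λ)`: the supremum over all joint Markov policies of
the expected total reward minus the penalty `∑_t λ_t (|A_t| − m)`. -/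
noncomputable def lagrangeValue (P : Bool → S → S → ℝ) (s1 : S) (r : ℕ → S → Bool → ℝ)
    (T K m : ℕ) (lam : ℕ → ℝ) : ℝ :=
  sSup {v | ∃ πb : (Fin K → S) → (Fin K → Bool) → ℕ → ℝ, IsPolicy πb ∧
    v = expVal (jointKernel P K) (fun _ => s1) πb T
      (fun t s a => jointReward r K t s a - lam t * (numActive a - (m : ℝ)))}

/-- A joint Markov policy is feasible if it activates exactly `m` arms in every period
with probability one. -/
def Feasible (P : Bool → S → S → ℝ) (s1 : S) (T K m : ℕ)
    (πb : (Fin K → S) → (Fin K → Bool) → ℕ → ℝ) : Prop :=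
  IsPolicy πb ∧ ∀ t ∈ Finset.Icc 1 T, ∀ s a, numActive a ≠ (m : ℝ) →
    saDist (jointKernel P K) (fun _ => s1) πb t s a = 0

end Sub

end RMAB

namespace RMAB

open Finset

section Helpers

variable {σ β : Type*} [Fintype σ] [Fintype β] [DecidableEq σ]
variable {P : β → σ → σ → ℝ} {init : σ} {π : σ → β → ℕ → ℝ}

lemma saDist_nonneg (hP : IsKernel P) (hπ : IsPolicy π) :
    ∀ t s a, 0 ≤ saDist P init π t s a := by
  have key : ∀ n s a, 0 ≤ saDist P init π (n + 1) s a := by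
    intro n
    induction n with
    | zero =>
      intro s a
      show 0 ≤ (if s = init then (1:ℝ) else 0) * π s a 1
      apply mul_nonneg _ (hπ.1 _ _ _)
      split <;> norm_num
    | succ n ih =>
      intro s a
      show 0 ≤ (∑ s' : σ, ∑ a' : β, saDist P init π (n + 1) s' a' * P a' s' s) * π s a (n + 2)
      apply mul_nonneg _ (hπ.1 _ _ _)
      apply Finset.sum_nonneg; intro s' _
      apply Finset.sum_nonneg; intro a' _
      exact mul_nonneg (ih s' a') (hP.1 _ _ _)
  intro t
  cases t with
  | zero => intro s a; simp [saDist]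
  | succ n => exact key n

lemma saDist_sum_one (hP : IsKernel P) (hπ : IsPolicy π) :
    ∀ n, ∑ s : σ, ∑ a : β, saDist P init π (n + 1) s a = 1 := by
  intro n
  induction n with
  | zero =>
    show ∑ s : σ, ∑ a : β, (if s = init then (1:ℝ) else 0) * π s a 1 = 1
    have : ∀ s : σ, ∑ a : β, (if s = init then (1:ℝ) else 0) * π s a 1
        = if s = init then (1:ℝ) else 0 := by
      intro s
      rw [← Finset.mul_sum, hπ.2 s 1, mul_one]
    simp only [this]
    simp
  | succ n ih =>
    show ∑ s : σ, ∑ a : β,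
        (∑ s' : σ, ∑ a' : β, saDist P init π (n + 1) s' a' * P a' s' s) * π s a (n + 2) = 1
    have : ∀ s : σ, ∑ a : β,
        (∑ s' : σ, ∑ a' : β, saDist P init π (n + 1) s' a' * P a' s' s) * π s a (n + 2)
        = ∑ s' : σ, ∑ a' : β, saDist P init π (n + 1) s' a' * P a' s' s := by
      intro s; rw [← Finset.mul_sum, hπ.2 s _, mul_one]
    simp only [this]
    rw [Finset.sum_comm]
    have : ∀ s' : σ, ∑ s : σ, ∑ a' : β, saDist P init π (n + 1) s' a' * P a' s' s
        = ∑ a' : β, saDist P init π (n + 1) s' a' := by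
      intro s'
      rw [Finset.sum_comm]
      refine Finset.sum_congr rfl fun a' _ => ?_
      rw [← Finset.mul_sum, hP.2 a' s', mul_one]
    simp only [this]
    exact ih

lemma expVal_add_const (hP : IsKernel P) (hπ : IsPolicy π) (T : ℕ)
    (f : ℕ → σ → β → ℝ) (c : ℕ → ℝ) :
    expVal P init π T (fun t s a => f t s a + c t)
      = expVal P init π T f + ∑ t ∈ Finset.Icc 1 T, c t := by
  unfold expVal
  rw [← Finset.sum_add_distrib]
  refine Finset.sum_congr rfl fun t ht => ?_
  obtain ⟨n, rfl⟩ : ∃ n, t = n + 1 := ⟨t - 1, by have := (Finset.mem_Icc.mp ht).1; omega⟩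
  simp only
  have expand : ∀ s a, saDist P init π (n+1) s a * (f (n+1) s a + c (n+1))
      = saDist P init π (n+1) s a * f (n+1) s a + saDist P init π (n+1) s a * c (n+1) := by
    intro s a; ring
  simp only [expand, Finset.sum_add_distrib]
  congr 1
  rw [show ∀ x : ℝ, (∑ s : σ, ∑ a : β, saDist P init π (n+1) s a * x) = (∑ s : σ, ∑ a : β, saDist P init π (n+1) s a) * x from fun x => by rw [Finset.sum_mul]; exact Finset.sum_congr rfl fun s _ => by rw [Finset.sum_mul],
    saDist_sum_one hP hπ n, one_mul]

end Helpers

end RMAB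
namespace RMAB
open Finset
section PiSums
variable {σ β : Type*} [Fintype σ] [Fintype β] [DecidableEq σ]

omit [DecidableEq σ] in
lemma sum_pi_prod {K : ℕ} (F : Fin K → σ → ℝ) :
    ∑ f : Fin K → σ, ∏ x, F x (f x) = ∏ x, ∑ s, F x s := (Fintype.prod_sum _).symm

omit [DecidableEq σ] in
lemma sum_pi_prod₂ {K : ℕ} (F : Fin K → σ → β → ℝ) :
    ∑ f : Fin K → σ, ∑ g : Fin K → β, ∏ x, F x (f x) (g x) = ∏ x, ∑ s, ∑ a, F x s a := by
  have h1 : ∀ f : Fin K → σ, ∑ g : Fin K → β, ∏ x, F x (f x) (g x) = ∏ x, ∑ a, F x (f x) a :=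
    fun f => (Fintype.prod_sum (fun x a => F x (f x) a)).symm
  simp only [h1]
  exact sum_pi_prod (fun x s => ∑ a, F x s a)

lemma indicator_pi {K : ℕ} (c : Fin K → σ) (f : Fin K → σ) :
    (if f = c then (1:ℝ) else 0) = ∏ x, (if f x = c x then (1:ℝ) else 0) := by
  by_cases h : f = c
  · subst h; simp
  · rw [if_neg h]
    obtain ⟨x, hx⟩ := Function.ne_iff.mp h
    exact (Finset.prod_eq_zero (Finset.mem_univ x)
      (show (if f x = c x then (1:ℝ) else 0) = 0 from if_neg hx)).symm

end PiSums

/-- The product policy on the joint MDP. -/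
def prodPolicy {σ β : Type*} (π : σ → β → ℕ → ℝ) (K : ℕ) :
    (Fin K → σ) → (Fin K → β) → ℕ → ℝ :=
  fun s a t => ∏ x, π (s x) (a x) t

section Helpers2
variable {S : Type*} [Fintype S] [DecidableEq S]
variable {P : Bool → S → S → ℝ} {s1 : S} {π : S → Bool → ℕ → ℝ} {K : ℕ}

lemma isPolicy_prod (hπ : IsPolicy π) : IsPolicy (prodPolicy π K) := by
  constructor
  · intro s a t
    exact Finset.prod_nonneg fun x _ => hπ.1 _ _ _
  · intro s t
    show (∑ a : Fin K → Bool, ∏ x, π (s x) (a x) t) = 1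
    rw [sum_pi_prod (fun x a => π (s x) a t)]
    simp only [hπ.2, Finset.prod_const_one]

lemma isKernel_joint (hP : IsKernel P) : IsKernel (jointKernel P K) := by
  constructor
  · intro a s s'
    exact Finset.prod_nonneg fun x _ => hP.1 _ _ _
  · intro a s
    show (∑ s' : Fin K → S, ∏ x, P (a x) (s x) (s' x)) = 1
    rw [sum_pi_prod (fun x s' => P (a x) (s x) s')]
    simp only [hP.2, Finset.prod_const_one]

lemma saDist_prod :
    ∀ n (sb : Fin K → S) (ab : Fin K → Bool),
      saDist (jointKernel P K) (fun _ => s1) (prodPolicy π K) (n + 1) sb ab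
        = ∏ x, saDist P s1 π (n + 1) (sb x) (ab x) := by
  intro n
  induction n with
  | zero =>
    intro sb ab
    show (if sb = (fun _ => s1) then (1:ℝ) else 0) * prodPolicy π K sb ab 1 = _
    rw [indicator_pi, prodPolicy, ← Finset.prod_mul_distrib]
    rfl
  | succ n ih =>
    intro sb ab
    show (∑ sb' : Fin K → S, ∑ ab' : Fin K → Bool,
        saDist (jointKernel P K) (fun _ => s1) (prodPolicy π K) (n + 1) sb' ab'
          * jointKernel P K ab' sb' sb) * prodPolicy π K sb ab (n + 2) = _
    have : ∀ (sb' : Fin K → S) (ab' : Fin K → Bool),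
        saDist (jointKernel P K) (fun _ => s1) (prodPolicy π K) (n + 1) sb' ab'
          * jointKernel P K ab' sb' sb
        = ∏ x, (saDist P s1 π (n + 1) (sb' x) (ab' x) * P (ab' x) (sb' x) (sb x)) := by
      intro sb' ab'
      rw [ih, jointKernel, ← Finset.prod_mul_distrib]
    simp only [this]
    rw [sum_pi_prod₂ (fun x s a => saDist P s1 π (n + 1) s a * P a s (sb x)),
      prodPolicy, ← Finset.prod_mul_distrib]
    rfl

end Helpers2
end RMAB
namespace RMAB
open Finset
section Occupation
variable {σ β : Type*} [Fintype σ] [Fintype β] [DecidableEq σ]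
variable {P : β → σ → σ → ℝ} {init : σ}

lemma exists_policy_of_occupation (hP : IsKernel P) (b0 : β) (μ : ℕ → σ → β → ℝ)
    (h0 : ∀ t s a, 0 ≤ μ t s a)
    (h1 : ∀ s, ∑ a, μ 1 s a = if s = init then 1 else 0)
    (h2 : ∀ t s, ∑ a, μ (t + 2) s a = ∑ s', ∑ a', μ (t + 1) s' a' * P a' s' s) :
    ∃ π : σ → β → ℕ → ℝ, IsPolicy π ∧ ∀ n s a, saDist P init π (n + 1) s a = μ (n + 1) s a := by
  classical
  set d : ℕ → σ → ℝ := fun t s => ∑ a, μ t s a with hd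
  set π0 : σ → β → ℕ → ℝ :=
    fun s a t => if d t s = 0 then (if a = b0 then 1 else 0) else μ t s a / d t s with hπ0
  refine ⟨π0, ⟨?_, ?_⟩, ?_⟩
  · intro s a t
    show (0:ℝ) ≤ if d t s = 0 then (if a = b0 then 1 else 0) else μ t s a / d t s
    by_cases h : d t s = 0
    · simp only [h, if_true]
      split <;> norm_num
    · simp only [h, if_false]
      exact div_nonneg (h0 _ _ _) (Finset.sum_nonneg fun a _ => h0 _ _ _)
  · intro s t
    show (∑ a : β, if d t s = 0 then (if a = b0 then (1:ℝ) else 0) else μ t s a / d t s) = 1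
    by_cases h : d t s = 0
    · simp [h]
    · simp only [h, if_false, ← Finset.sum_div]
      exact div_self h
  · intro n
    have dnn : ∀ t s, 0 ≤ d t s := fun t s => Finset.sum_nonneg fun a _ => h0 _ _ _
    have zero_of : ∀ t s a, d t s = 0 → μ t s a = 0 := by
      intro t s a hds
      exact (Finset.sum_eq_zero_iff_of_nonneg (fun a _ => h0 t s a)).mp hds a (Finset.mem_univ a)
    induction n with
    | zero =>
      intro s a
      show (if s = init then (1:ℝ) else 0) *
        (if d 1 s = 0 then (if a = b0 then (1:ℝ) else 0) else μ 1 s a / d 1 s) = μ 1 s a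
      by_cases hs : s = init
      · have hd1 : d 1 s = 1 := by rw [hd]; simp only [h1 s, if_pos hs]
        rw [if_pos hs, if_neg (by rw [hd1]; norm_num), hd1, div_one, one_mul]
      · have hd1 : d 1 s = 0 := by rw [hd]; simp only [h1 s, if_neg hs]
        rw [if_neg hs, zero_mul]
        exact (zero_of 1 s a hd1).symm
    | succ n ih =>
      intro s a
      show (∑ s' : σ, ∑ a' : β, saDist P init π0 (n + 1) s' a' * P a' s' s) *
        (if d (n+2) s = 0 then (if a = b0 then (1:ℝ) else 0) else μ (n+2) s a / d (n+2) s)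
          = μ (n + 2) s a
      have hsum : (∑ s' : σ, ∑ a' : β, saDist P init π0 (n + 1) s' a' * P a' s' s)
          = d (n + 2) s := by
        show _ = (∑ a, μ (n+2) s a)
        rw [h2 n s]
        exact Finset.sum_congr rfl fun s' _ => Finset.sum_congr rfl fun a' _ => by
          rw [ih s' a']
      rw [hsum]
      by_cases hz : d (n + 2) s = 0
      · rw [hz, zero_mul]
        exact (zero_of _ _ a hz).symm
      · rw [if_neg hz, mul_comm, div_mul_cancel₀ _ hz]
end Occupation
end RMAB
namespace RMAB
open Finset
section SumLemmas
variable {σ β : Type*} [Fintype σ] [Fintype β] [DecidableEq σ] [DecidableEq β]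

lemma sum4_swap {A B C D : Type*} [Fintype A] [Fintype B] [Fintype C] [Fintype D]
    (F : A → B → C → D → ℝ) :
    ∑ a : A, ∑ b : B, ∑ c : C, ∑ d : D, F a b c d
      = ∑ c : C, ∑ d : D, ∑ a : A, ∑ b : B, F a b c d :=
  calc ∑ a : A, ∑ b : B, ∑ c : C, ∑ d : D, F a b c d
      = ∑ a : A, ∑ c : C, ∑ b : B, ∑ d : D, F a b c d :=
        Finset.sum_congr rfl fun a _ => Finset.sum_comm
    _ = ∑ c : C, ∑ a : A, ∑ b : B, ∑ d : D, F a b c d := Finset.sum_comm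
    _ = ∑ c : C, ∑ a : A, ∑ d : D, ∑ b : B, F a b c d :=
        Finset.sum_congr rfl fun c _ => Finset.sum_congr rfl fun a _ => Finset.sum_comm
    _ = ∑ c : C, ∑ d : D, ∑ a : A, ∑ b : B, F a b c d :=
        Finset.sum_congr rfl fun c _ => Finset.sum_comm

lemma sum3_swap {A B C : Type*} [Fintype A] [Fintype B] [Fintype C]
    (F : A → B → C → ℝ) :
    ∑ a : A, ∑ b : B, ∑ c : C, F a b c = ∑ c : C, ∑ a : A, ∑ b : B, F a b c :=
  calc ∑ a : A, ∑ b : B, ∑ c : C, F a b c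
      = ∑ a : A, ∑ c : C, ∑ b : B, F a b c :=
        Finset.sum_congr rfl fun a _ => Finset.sum_comm
    _ = ∑ c : C, ∑ a : A, ∑ b : B, F a b c := Finset.sum_comm

lemma sum_ite_pair (F : σ → β → ℝ) (s0 : σ) (a0 : β) :
    ∑ s : σ, ∑ a : β, (if s0 = s ∧ a0 = a then F s a else 0) = F s0 a0 := by
  simp [ite_and, Finset.sum_ite_eq]

lemma sum_ite_and_right {c : Prop} [Decidable c] (a0 : β) (v : ℝ) :
    ∑ a : β, (if c ∧ a0 = a then v else 0) = if c then v else 0 := by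
  by_cases h : c <;> simp [ite_and, h, Finset.sum_ite_eq]

end SumLemmas

section Marg
variable {S : Type*} [Fintype S] [DecidableEq S]
variable (P : Bool → S → S → ℝ) (s1 : S) {K : ℕ}
variable (πb : (Fin K → S) → (Fin K → Bool) → ℕ → ℝ)

/-- Marginal state-action distribution of arm `x` under a joint policy. -/
noncomputable def marg (x : Fin K) (t : ℕ) (s : S) (a : Bool) : ℝ :=
  ∑ sb : Fin K → S, ∑ ab : Fin K → Bool,
    if sb x = s ∧ ab x = a then saDist (jointKernel P K) (fun _ => s1) πb t sb ab else 0

variable {P πb}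

lemma marg_nonneg (hP : IsKernel P) (hπb : IsPolicy πb) (x : Fin K) (t : ℕ) (s : S) (a : Bool) :
    0 ≤ marg P s1 πb x t s a := by
  apply Finset.sum_nonneg; intro sb _
  apply Finset.sum_nonneg; intro ab _
  split
  · exact saDist_nonneg (isKernel_joint hP) hπb _ _ _
  · exact le_refl 0

lemma marg_val (x : Fin K) (t : ℕ) (g : S → Bool → ℝ) :
    ∑ s : S, ∑ a : Bool, marg P s1 πb x t s a * g s a
      = ∑ sb : Fin K → S, ∑ ab : Fin K → Bool,
          saDist (jointKernel P K) (fun _ => s1) πb t sb ab * g (sb x) (ab x) := by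
  simp only [marg, Finset.sum_mul, ite_mul, zero_mul]
  rw [sum4_swap]
  refine Finset.sum_congr rfl fun sb _ => Finset.sum_congr rfl fun ab _ => ?_
  exact sum_ite_pair (fun s a => saDist (jointKernel P K) (fun _ => s1) πb t sb ab * g s a) _ _

lemma marg_sum_a (x : Fin K) (t : ℕ) (s : S) :
    ∑ a : Bool, marg P s1 πb x t s a
      = ∑ sb : Fin K → S, ∑ ab : Fin K → Bool,
          (if sb x = s then saDist (jointKernel P K) (fun _ => s1) πb t sb ab else 0) := by
  unfold marg
  rw [Finset.sum_comm]
  refine Finset.sum_congr rfl fun sb _ => ?_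
  rw [Finset.sum_comm]
  exact Finset.sum_congr rfl fun ab _ => sum_ite_and_right _ _

lemma marg_one (hπb : IsPolicy πb) (x : Fin K) (s : S) :
    ∑ a : Bool, marg P s1 πb x 1 s a = if s = s1 then 1 else 0 := by
  rw [marg_sum_a]
  have step1 : ∀ sb : Fin K → S,
      (∑ ab : Fin K → Bool, if sb x = s
          then saDist (jointKernel P K) (fun _ => s1) πb 1 sb ab else 0)
      = if sb = (fun _ => s1) then (if sb x = s then (1:ℝ) else 0) else 0 := by
    intro sb
    show (∑ ab : Fin K → Bool, if sb x = s
        then (if sb = (fun _ => s1) then (1:ℝ) else 0) * πb sb ab 1 else 0) = _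
    by_cases h : sb x = s
    · simp only [h, if_true, ← Finset.mul_sum, hπb.2 sb 1, mul_one]
    · simp [h]
  simp only [step1]
  rw [Finset.sum_ite_eq' Finset.univ (fun _ => s1) (fun sb => if sb x = s then (1:ℝ) else 0)]
  simp [eq_comm]

lemma sum_pi_kernel (hP : IsKernel P) (x : Fin K) (sb' : Fin K → S) (ab' : Fin K → Bool)
    (s : S) :
    ∑ sb : Fin K → S, (if sb x = s then ∏ y, P (ab' y) (sb' y) (sb y) else 0)
      = P (ab' x) (sb' x) s := by
  have point : ∀ sb : Fin K → S, (if sb x = s then ∏ y, P (ab' y) (sb' y) (sb y) else 0)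
      = ∏ y, (if y = x then (if sb y = s then P (ab' y) (sb' y) (sb y) else 0)
          else P (ab' y) (sb' y) (sb y)) := by
    intro sb
    by_cases h : sb x = s
    · rw [if_pos h]
      refine Finset.prod_congr rfl fun y _ => ?_
      by_cases hy : y = x
      · subst hy; rw [if_pos rfl, if_pos h]
      · rw [if_neg hy]
    · rw [if_neg h]
      exact (Finset.prod_eq_zero (Finset.mem_univ x) (by rw [if_pos rfl, if_neg h])).symm
  simp only [point]
  rw [sum_pi_prod (fun y u => if y = x then (if u = s then P (ab' y) (sb' y) u else 0)
    else P (ab' y) (sb' y) u)]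
  have factor : ∀ y : Fin K, (∑ u : S, if y = x then (if u = s then P (ab' y) (sb' y) u else 0)
      else P (ab' y) (sb' y) u) = if y = x then P (ab' y) (sb' y) s else 1 := by
    intro y
    by_cases hy : y = x
    · simp only [hy, if_true]
      rw [Finset.sum_ite_eq' Finset.univ s (fun u => P (ab' x) (sb' x) u)]
      simp
    · simp only [hy, if_false]
      exact hP.2 _ _
  simp only [factor]
  rw [Finset.prod_ite_eq' Finset.univ x (fun y => P (ab' y) (sb' y) s)]
  simp

lemma marg_step (hP : IsKernel P) (hπb : IsPolicy πb) (x : Fin K) (t : ℕ) (s : S) :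
    ∑ a : Bool, marg P s1 πb x (t + 2) s a
      = ∑ s' : S, ∑ a' : Bool, marg P s1 πb x (t + 1) s' a' * P a' s' s := by
  rw [marg_sum_a]
  have step1 : ∀ sb : Fin K → S,
      (∑ ab : Fin K → Bool, if sb x = s
          then saDist (jointKernel P K) (fun _ => s1) πb (t + 2) sb ab else 0)
      = if sb x = s then (∑ sb' : Fin K → S, ∑ ab' : Fin K → Bool,
          saDist (jointKernel P K) (fun _ => s1) πb (t + 1) sb' ab'
            * jointKernel P K ab' sb' sb) else 0 := by
    intro sb
    show (∑ ab : Fin K → Bool, if sb x = s then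
        (∑ sb' : Fin K → S, ∑ ab' : Fin K → Bool,
          saDist (jointKernel P K) (fun _ => s1) πb (t + 1) sb' ab'
            * jointKernel P K ab' sb' sb) * πb sb ab (t + 2) else 0) = _
    by_cases h : sb x = s
    · simp only [h, if_true, ← Finset.mul_sum, hπb.2 sb (t + 2), mul_one]
    · simp [h]
  simp only [step1]
  -- push the ite inside the double sum and swap
  have step2 : ∀ sb : Fin K → S,
      (if sb x = s then (∑ sb' : Fin K → S, ∑ ab' : Fin K → Bool,
          saDist (jointKernel P K) (fun _ => s1) πb (t + 1) sb' ab'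
            * jointKernel P K ab' sb' sb) else 0)
      = ∑ sb' : Fin K → S, ∑ ab' : Fin K → Bool,
          saDist (jointKernel P K) (fun _ => s1) πb (t + 1) sb' ab'
            * (if sb x = s then jointKernel P K ab' sb' sb else 0) := by
    intro sb
    by_cases h : sb x = s <;> simp [h]
  simp only [step2]
  rw [Finset.sum_comm]
  have step3 : ∀ sb' : Fin K → S,
      (∑ sb : Fin K → S, ∑ ab' : Fin K → Bool,
        saDist (jointKernel P K) (fun _ => s1) πb (t + 1) sb' ab'
          * (if sb x = s then jointKernel P K ab' sb' sb else 0))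
      = ∑ ab' : Fin K → Bool,
          saDist (jointKernel P K) (fun _ => s1) πb (t + 1) sb' ab' * P (ab' x) (sb' x) s := by
    intro sb'
    rw [Finset.sum_comm]
    refine Finset.sum_congr rfl fun ab' _ => ?_
    rw [← Finset.mul_sum]
    congr 1
    exact sum_pi_kernel hP x sb' ab' s
  simp only [step3]
  -- now identify with the marginal
  rw [show (∑ s' : S, ∑ a' : Bool, marg P s1 πb x (t + 1) s' a' * P a' s' s)
      = ∑ sb' : Fin K → S, ∑ ab' : Fin K → Bool,
          saDist (jointKernel P K) (fun _ => s1) πb (t + 1) sb' ab' * P (ab' x) (sb' x) s from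
    marg_val s1 x (t + 1) (fun s' a' => P a' s' s)]

end Marg
end RMAB
namespace RMAB
open Finset
section ProdVal
variable {σ β : Type*} [Fintype σ] [Fintype β] [DecidableEq σ] [DecidableEq β]

lemma sum_prod_single {K : ℕ} (μ : σ → β → ℝ) (hμ : ∑ s, ∑ a, μ s a = 1)
    (g : σ → β → ℝ) (y : Fin K) :
    ∑ sb : Fin K → σ, ∑ ab : Fin K → β, (∏ x, μ (sb x) (ab x)) * g (sb y) (ab y)
      = ∑ s, ∑ a, μ s a * g s a := by
  have point : ∀ (sb : Fin K → σ) (ab : Fin K → β),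
      (∏ x, μ (sb x) (ab x)) * g (sb y) (ab y)
        = ∏ x, (if x = y then μ (sb x) (ab x) * g (sb x) (ab x) else μ (sb x) (ab x)) := by
    intro sb ab
    rw [← Finset.mul_prod_erase Finset.univ _ (Finset.mem_univ y),
        ← Finset.mul_prod_erase Finset.univ
          (fun x => if x = y then μ (sb x) (ab x) * g (sb x) (ab x) else μ (sb x) (ab x))
          (Finset.mem_univ y)]
    rw [if_pos rfl]
    rw [Finset.prod_congr rfl fun x hx =>
      if_neg (Finset.ne_of_mem_erase hx)]
    ring
  simp only [point]
  rw [sum_pi_prod₂ (fun x s a => if x = y then μ s a * g s a else μ s a)]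
  have factor : ∀ x : Fin K, (∑ s, ∑ a, if x = y then μ s a * g s a else μ s a)
      = if x = y then (∑ s, ∑ a, μ s a * g s a) else 1 := by
    intro x
    by_cases hx : x = y <;> simp [hx, hμ]
  simp only [factor]
  rw [Finset.prod_ite_eq' Finset.univ y (fun _ => ∑ s, ∑ a, μ s a * g s a)]
  simp

end ProdVal
end RMAB

namespace RMAB

/-- Lemma 2. For every `λ ∈ ℝ^T`, the Lagrangian relaxation value
decomposes as `P(λ) = K·Q(λ) + m·∑_{t=1}^T λ_t`, where `Q(λ)` is the optimal value of the
single sub-MDP with per-period penalty `λ_t` for the active action. -/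
theorem lagrangeValue_decomposition
    {S : Type*} [Fintype S] [DecidableEq S]
    (T K m : ℕ) (hm : m ≤ K)
    (P : Bool → S → S → ℝ) (hP : IsKernel P) (s1 : S)
    (r : ℕ → S → Bool → ℝ) (hr : ∀ t s a, 0 ≤ r t s a)
    (lam : ℕ → ℝ) :
    lagrangeValue P s1 r T K m lam
      = K * Qval P s1 r T lam + m * ∑ t ∈ Finset.Icc 1 T, lam t := by
  classical
  set g : ℕ → S → Bool → ℝ := fun t s a => r t s a - lam t * actVal a with hg
  set c : ℝ := (m : ℝ) * ∑ t ∈ Finset.Icc 1 T, lam t with hc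
  set B : Set ℝ := {v | ∃ π : S → Bool → ℕ → ℝ, IsPolicy π ∧ v = subValue P s1 r lam T π}
    with hB
  set A : Set ℝ := {v | ∃ πb : (Fin K → S) → (Fin K → Bool) → ℕ → ℝ, IsPolicy πb ∧
    v = expVal (jointKernel P K) (fun _ => s1) πb T
      (fun t s a => jointReward r K t s a - lam t * (numActive a - (m : ℝ)))} with hA
  have hLag : lagrangeValue P s1 r T K m lam = sSup A := rfl
  have hQ : Qval P s1 r T lam = sSup B := rfl
  -- the trivial "always passive" policy
  have hπ0 : IsPolicy (fun (_ : S) (a : Bool) (_ : ℕ) => if a then (0:ℝ) else 1) := by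
    constructor
    · intro s a t; dsimp only; split <;> norm_num
    · intro s t; simp
  have hBne : B.Nonempty := ⟨_, _, hπ0, rfl⟩
  -- B is bounded above
  have hBbdd : BddAbove B := by
    refine ⟨∑ t ∈ Finset.Icc 1 T, ∑ s : S, ∑ a : Bool, |g t s a|, ?_⟩
    rintro v ⟨π, hπ, rfl⟩
    show expVal P s1 π T g ≤ _
    unfold expVal
    refine Finset.sum_le_sum fun t ht => ?_
    obtain ⟨n, rfl⟩ : ∃ n, t = n + 1 := ⟨t - 1, by have := (Finset.mem_Icc.mp ht).1; omega⟩
    refine Finset.sum_le_sum fun s _ => Finset.sum_le_sum fun a _ => ?_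
    have hnn := saDist_nonneg (P := P) (init := s1) hP hπ (n + 1)
    have hle1 : saDist P s1 π (n + 1) s a ≤ 1 := by
      calc saDist P s1 π (n + 1) s a
          ≤ ∑ a' : Bool, saDist P s1 π (n + 1) s a' :=
            Finset.single_le_sum (fun a' _ => hnn s a') (Finset.mem_univ a)
        _ ≤ ∑ s' : S, ∑ a' : Bool, saDist P s1 π (n + 1) s' a' :=
            Finset.single_le_sum
              (fun s' _ => Finset.sum_nonneg fun a' _ => hnn s' a') (Finset.mem_univ s)
        _ = 1 := saDist_sum_one hP hπ n
    calc saDist P s1 π (n + 1) s a * g (n + 1) s a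
        ≤ saDist P s1 π (n + 1) s a * |g (n + 1) s a| :=
          mul_le_mul_of_nonneg_left (le_abs_self _) (hnn s a)
      _ ≤ 1 * |g (n + 1) s a| := mul_le_mul_of_nonneg_right hle1 (abs_nonneg _)
      _ = |g (n + 1) s a| := one_mul _
  -- splitting the penalized joint reward
  have fsplit : (fun (t : ℕ) (sb : Fin K → S) (ab : Fin K → Bool) =>
      jointReward r K t sb ab - lam t * (numActive ab - (m : ℝ)))
      = fun t sb ab => (∑ x, g t (sb x) (ab x)) + lam t * m := by
    funext t sb ab
    simp only [jointReward, numActive, hg, Finset.sum_sub_distrib]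
    rw [← Finset.mul_sum]
    ring
  have hcsum : (∑ t ∈ Finset.Icc 1 T, lam t * m) = c := by
    rw [hc, Finset.mul_sum]
    exact Finset.sum_congr rfl fun t _ => mul_comm _ _
  -- joint value rewrite
  have joint_val : ∀ πb : (Fin K → S) → (Fin K → Bool) → ℕ → ℝ, IsPolicy πb →
      expVal (jointKernel P K) (fun _ => s1) πb T
        (fun t s a => jointReward r K t s a - lam t * (numActive a - (m : ℝ)))
      = expVal (jointKernel P K) (fun _ => s1) πb T
          (fun t sb ab => ∑ x, g t (sb x) (ab x)) + c := by
    intro πb hπb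
    rw [fsplit, expVal_add_const (isKernel_joint hP) hπb, hcsum]
  -- decomposition of the joint value into arms via marginals
  have sum_decomp : ∀ πb : (Fin K → S) → (Fin K → Bool) → ℕ → ℝ,
      expVal (jointKernel P K) (fun _ => s1) πb T (fun t sb ab => ∑ x, g t (sb x) (ab x))
      = ∑ x : Fin K, ∑ t ∈ Finset.Icc 1 T, ∑ s : S, ∑ a : Bool,
          marg P s1 πb x t s a * g t s a := by
    intro πb
    unfold expVal
    have per_t : ∀ t, (∑ sb : Fin K → S, ∑ ab : Fin K → Bool,
        saDist (jointKernel P K) (fun _ => s1) πb t sb ab * ∑ x, g t (sb x) (ab x))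
        = ∑ x : Fin K, ∑ s : S, ∑ a : Bool, marg P s1 πb x t s a * g t s a := by
      intro t
      have expand : ∀ (sb : Fin K → S) (ab : Fin K → Bool),
          saDist (jointKernel P K) (fun _ => s1) πb t sb ab * ∑ x, g t (sb x) (ab x)
          = ∑ x, saDist (jointKernel P K) (fun _ => s1) πb t sb ab * g t (sb x) (ab x) :=
        fun sb ab => Finset.mul_sum _ _ _
      simp only [expand]
      rw [sum3_swap (fun sb ab x =>
        saDist (jointKernel P K) (fun _ => s1) πb t sb ab * g t (sb x) (ab x))]
      exact Finset.sum_congr rfl fun x _ => (marg_val s1 x t (g t)).symm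
    simp only [per_t]
    exact Finset.sum_comm
  -- each arm's marginal value is at most Q
  have arm_le : ∀ πb : (Fin K → S) → (Fin K → Bool) → ℕ → ℝ, IsPolicy πb → ∀ x : Fin K,
      (∑ t ∈ Finset.Icc 1 T, ∑ s : S, ∑ a : Bool, marg P s1 πb x t s a * g t s a)
        ≤ Qval P s1 r T lam := by
    intro πb hπb x
    obtain ⟨π, hπ, hsa⟩ := exists_policy_of_occupation hP false (marg P s1 πb x)
      (fun t s a => marg_nonneg s1 hP hπb x t s a)
      (fun s => marg_one s1 hπb x s)
      (fun t s => marg_step s1 hP hπb x t s)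
    have hval : (∑ t ∈ Finset.Icc 1 T, ∑ s : S, ∑ a : Bool, marg P s1 πb x t s a * g t s a)
        = subValue P s1 r lam T π := by
      have hsv : subValue P s1 r lam T π = expVal P s1 π T g := rfl
      rw [hsv]
      unfold expVal
      refine Finset.sum_congr rfl fun t ht => ?_
      obtain ⟨n, rfl⟩ : ∃ n, t = n + 1 := ⟨t - 1, by have := (Finset.mem_Icc.mp ht).1; omega⟩
      refine Finset.sum_congr rfl fun s _ => Finset.sum_congr rfl fun a _ => ?_
      rw [hsa n s a]
    rw [hval, hQ]
    exact le_csSup hBbdd ⟨π, hπ, rfl⟩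
  -- upper bound on A
  have upper : ∀ v ∈ A, v ≤ (K : ℝ) * Qval P s1 r T lam + c := by
    rintro v ⟨πb, hπb, rfl⟩
    rw [joint_val πb hπb, sum_decomp πb]
    have hle : (∑ x : Fin K, ∑ t ∈ Finset.Icc 1 T, ∑ s : S, ∑ a : Bool,
        marg P s1 πb x t s a * g t s a) ≤ ∑ _x : Fin K, Qval P s1 r T lam :=
      Finset.sum_le_sum fun x _ => arm_le πb hπb x
    have hsum : (∑ _x : Fin K, Qval P s1 r T lam) = (K : ℝ) * Qval P s1 r T lam := by
      rw [Finset.sum_const, Finset.card_univ, Fintype.card_fin, nsmul_eq_mul]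
    linarith
  -- product policies give elements of A
  have lower_mem : ∀ π : S → Bool → ℕ → ℝ, IsPolicy π →
      (K : ℝ) * subValue P s1 r lam T π + c ∈ A := by
    intro π hπ
    refine ⟨prodPolicy π K, isPolicy_prod hπ, ?_⟩
    rw [joint_val _ (isPolicy_prod hπ)]
    congr 1
    have hsv : subValue P s1 r lam T π = expVal P s1 π T g := rfl
    rw [hsv]
    unfold expVal
    rw [Finset.mul_sum]
    refine Finset.sum_congr rfl fun t ht => ?_
    obtain ⟨n, rfl⟩ : ∃ n, t = n + 1 := ⟨t - 1, by have := (Finset.mem_Icc.mp ht).1; omega⟩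
    have expand : ∀ (sb : Fin K → S) (ab : Fin K → Bool),
        saDist (jointKernel P K) (fun _ => s1) (prodPolicy π K) (n + 1) sb ab
          * ((fun t sb ab => ∑ x, g t (sb x) (ab x)) (n + 1) sb ab)
        = ∑ x, (∏ y, saDist P s1 π (n + 1) (sb y) (ab y)) * g (n + 1) (sb x) (ab x) := by
      intro sb ab
      rw [show saDist (jointKernel P K) (fun _ => s1) (prodPolicy π K) (n + 1) sb ab
        = ∏ y, saDist P s1 π (n + 1) (sb y) (ab y) from saDist_prod n sb ab, Finset.mul_sum]
    simp only [expand]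
    rw [sum3_swap (A := Fin K → S) (B := Fin K → Bool) (C := Fin K)
      (fun sb ab x => (∏ y, saDist P s1 π (n + 1) (sb y) (ab y)) * g (n + 1) (sb x) (ab x))]
    have hx : ∀ x : Fin K,
        (∑ sb : Fin K → S, ∑ ab : Fin K → Bool,
          (∏ y, saDist P s1 π (n + 1) (sb y) (ab y)) * g (n + 1) (sb x) (ab x))
        = ∑ s : S, ∑ a : Bool, saDist P s1 π (n + 1) s a * g (n + 1) s a :=
      fun x => sum_prod_single (saDist P s1 π (n + 1)) (saDist_sum_one hP hπ n)
        (g (n + 1)) x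
    simp only [hx]
    rw [Finset.sum_const, Finset.card_univ, Fintype.card_fin, nsmul_eq_mul]

  have hAne : A.Nonempty := ⟨_, lower_mem _ hπ0⟩
  have hAbdd : BddAbove A := ⟨_, upper⟩
  rw [hLag]
  apply le_antisymm
  · exact csSup_le hAne upper
  · by_cases hK : K = 0
    · have hm0 : m = 0 := by omega
      have hc0 : c = 0 := by rw [hc, hm0]; simp
      have helt := le_csSup hAbdd (lower_mem _ hπ0)
      rw [hK] at helt ⊢
      simp only [Nat.cast_zero, zero_mul, zero_add, hc0] at helt ⊢
      exact helt
    · have hKpos : (0:ℝ) < K := by exact_mod_cast Nat.pos_of_ne_zero hK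
      have hQle : Qval P s1 r T lam ≤ (sSup A - c) / K := by
        rw [hQ]
        refine csSup_le hBne ?_
        rintro w ⟨π, hπ, rfl⟩
        rw [le_div_iff₀ hKpos, mul_comm]
        have := le_csSup hAbdd (lower_mem π hπ)
        linarith
      have h2 : (K : ℝ) * Qval P s1 r T lam ≤ sSup A - c := by
        rw [mul_comm]
        exact (le_div_iff₀ hKpos).mp hQle
      linarith

end RMAB
end

section
/- Suppose there exists an optimal Markov policy π for the sub-MDP with rewards r such that π(s,1,t) = 1 and P^π(S_t = s) > 0 for some state s and time t. Let r' be a modified reward function with r'_t(s,1) > r_t(s,1) and r' equal to r in all other arguments. Then the active action is strictly optimal in state s at time t under r': for every Markov policy π' with π'(s,0,t) = 1, the total expected reward of π' under r' is strictly less than the total expected reward of π under r'; in particular no optimal Markov policy for the sub-MDP with rewards r' takes action 0 with probability one in state s at time t. -/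
open Finset

namespace RMAB

lemma saDist_eq_zero_aux {S : Type*} [Fintype S] [DecidableEq S]
    (P : Bool → S → S → ℝ) (init : S) (π : S → Bool → ℕ → ℝ)
    {t : ℕ} (ht : 1 ≤ t) {s : S} {a : Bool} (h : π s a t = 0) :
    saDist P init π t s a = 0 := by
  match t, ht with
  | 1, _ => simp [saDist, h]
  | (k+2), _ => simp [saDist, h]

lemma expVal_diff_aux {S : Type*} [Fintype S] [DecidableEq S]
    (P : Bool → S → S → ℝ) (s1 : S) (π : S → Bool → ℕ → ℝ) (T : ℕ)
    (r r' : ℕ → S → Bool → ℝ) (s : S) (t : ℕ) (ht : t ∈ Finset.Icc 1 T)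
    (hsame : ∀ t' s' a, ¬(t' = t ∧ s' = s ∧ a = true) → r' t' s' a = r t' s' a) :
    expVal P s1 π T r' =
      expVal P s1 π T r + saDist P s1 π t s true * (r' t s true - r t s true) := by
  have h1 : expVal P s1 π T r' - expVal P s1 π T r
      = ∑ t' ∈ Finset.Icc 1 T, ∑ s' : S, ∑ a : Bool,
          saDist P s1 π t' s' a * (r' t' s' a - r t' s' a) := by
    unfold expVal
    rw [← Finset.sum_sub_distrib]
    refine Finset.sum_congr rfl fun t' _ => ?_
    rw [← Finset.sum_sub_distrib]
    refine Finset.sum_congr rfl fun s' _ => ?_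
    rw [← Finset.sum_sub_distrib]
    exact Finset.sum_congr rfl fun a _ => by ring
  have h2 : ∀ t' s' a, saDist P s1 π t' s' a * (r' t' s' a - r t' s' a)
      = if t' = t then (if s' = s then (if a = true then
          saDist P s1 π t s true * (r' t s true - r t s true) else 0) else 0) else 0 := by
    intro t' s' a
    by_cases h : t' = t ∧ s' = s ∧ a = true
    · obtain ⟨h1, h2, h3⟩ := h; subst h1; subst h2; subst h3; simp
    · rw [hsame t' s' a h]
      by_cases ht' : t' = t
      · by_cases hs' : s' = s
        · by_cases ha : a = true
          · exact absurd ⟨ht', hs', ha⟩ h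
          · simp [ht', hs', ha]
        · simp [ht', hs']
      · simp [ht']
  have h3 : (∑ t' ∈ Finset.Icc 1 T, ∑ s' : S, ∑ a : Bool,
      saDist P s1 π t' s' a * (r' t' s' a - r t' s' a))
      = saDist P s1 π t s true * (r' t s true - r t s true) := by
    refine Eq.trans (Finset.sum_congr rfl fun t' _ => Finset.sum_congr rfl fun s' _ =>
      Finset.sum_congr rfl fun a _ => h2 t' s' a) ?_
    rw [Finset.sum_eq_single t]
    · rw [Finset.sum_eq_single s]
      · simp
      · intro b _ hb; simp [hb]
      · intro hs; exact absurd (Finset.mem_univ s) hs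
    · intro b _ hb; simp [hb]
    · intro h; exact absurd ht h
  linarith [h1, h3]

/-- Lemma: monotonicity of optimal actions in rewards. If an optimal Markov
policy `π` for the sub-MDP with rewards `r` takes the active action in state `s` at time `t`
and visits `(s,t)` with positive probability, and `r'` strictly increases the reward
`r_t(s,1)` while agreeing with `r` everywhere else, then the active action is strictly optimal
at `(s,t)` under `r'`: every Markov policy `π'` taking the passive action at `(s,t)` with
probability one has strictly smaller total expected reward under `r'` than `π`; in particular
no optimal Markov policy for rewards `r'` takes the passive action at `(s,t)` with
probability one. -/
theorem active_strictly_optimal_of_increased_reward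
    {S : Type*} [Fintype S] [DecidableEq S]
    (T : ℕ)
    (P : Bool → S → S → ℝ) (hP : IsKernel P) (s1 : S)
    (r : ℕ → S → Bool → ℝ) (hr : ∀ t s a, 0 ≤ r t s a)
    (π : S → Bool → ℕ → ℝ) (hπ : IsPolicy π)
    (hπopt : ∀ π' : S → Bool → ℕ → ℝ, IsPolicy π' →
      expVal P s1 π' T r ≤ expVal P s1 π T r)
    (s : S) (t : ℕ) (ht1 : 1 ≤ t) (htT : t ≤ T)
    (hactive : π s true t = 1)
    (hvisited : 0 < ∑ a : Bool, saDist P s1 π t s a)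
    (r' : ℕ → S → Bool → ℝ)
    (hincr : r t s true < r' t s true)
    (hsame : ∀ t' s' a, ¬(t' = t ∧ s' = s ∧ a = true) → r' t' s' a = r t' s' a) :
    (∀ π' : S → Bool → ℕ → ℝ, IsPolicy π' → π' s false t = 1 →
      expVal P s1 π' T r' < expVal P s1 π T r') ∧
    ∀ π' : S → Bool → ℕ → ℝ, IsPolicy π' →
      (∀ π'' : S → Bool → ℕ → ℝ, IsPolicy π'' →
        expVal P s1 π'' T r' ≤ expVal P s1 π' T r') →
      π' s false t ≠ 1 := by
  have ht : t ∈ Finset.Icc 1 T := Finset.mem_Icc.mpr ⟨ht1, htT⟩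
  have hπfalse : π s false t = 0 := by
    have := hπ.2 s t
    rw [Fintype.sum_bool] at this
    linarith [this, hactive]
  have hd0 : saDist P s1 π t s false = 0 := saDist_eq_zero_aux P s1 π ht1 hπfalse
  have hdpos : 0 < saDist P s1 π t s true := by
    rw [Fintype.sum_bool, hd0, add_zero] at hvisited
    exact hvisited
  have hπr' : expVal P s1 π T r' =
      expVal P s1 π T r + saDist P s1 π t s true * (r' t s true - r t s true) :=
    expVal_diff_aux P s1 π T r r' s t ht hsame
  have main : ∀ π' : S → Bool → ℕ → ℝ, IsPolicy π' → π' s false t = 1 →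
      expVal P s1 π' T r' < expVal P s1 π T r' := by
    intro π' hπ' hfalse
    have hπ'true : π' s true t = 0 := by
      have := hπ'.2 s t
      rw [Fintype.sum_bool] at this
      linarith
    have hd' : saDist P s1 π' t s true = 0 := saDist_eq_zero_aux P s1 π' ht1 hπ'true
    have hπ'r' : expVal P s1 π' T r' =
        expVal P s1 π' T r + saDist P s1 π' t s true * (r' t s true - r t s true) :=
      expVal_diff_aux P s1 π' T r r' s t ht hsame
    have hle := hπopt π' hπ'
    have hΔ : 0 < r' t s true - r t s true := by linarith
    nlinarith [mul_pos hdpos hΔ]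
  refine ⟨main, fun π' hπ' hopt' hfalse => ?_⟩
  have h1 := main π' hπ' hfalse
  have h2 := hopt' π hπ
  linarith

end RMAB
end

section
/- Let n ≥ 1, let total be a natural number, let frac ∈ ℝ^n satisfy frac_i ≥ 0 for all i and ∑_{i=1}^n frac_i = 1, and let avail ∈ ℕ^n satisfy total ≤ ∑_{i=1}^n avail_i and avail_i ≥ total·frac_i for all i. Then there exists b ∈ ℕ^n with ∑_{i=1}^n b_i = total, b_i ≤ avail_i for all i, and |b_i − total·frac_i| < 1 for all i; in particular the output of the Rounding procedure satisfies these properties. -/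
/-!
Put `x i = total * frac i`; these are nonnegative reals summing to `total`. Hence
`∑ ⌊x i⌋₊ ≤ total ≤ ∑ ⌈x i⌉₊`, and a discrete intermediate value argument yields naturals
`⌊x i⌋₊ ≤ b i ≤ ⌈x i⌉₊` with `∑ b i = total`. Any such `b i` is within distance `< 1` of `x i`,
and `b i ≤ ⌈x i⌉₊ ≤ avail i` because `avail i` is an integer above `x i`.
-/

open Finset

theorem Finset.exists_le_le_sum_eq {ι : Type*} [DecidableEq ι] (s : Finset ι) {lo hi : ι → ℕ}
    (hle : ∀ i, lo i ≤ hi i) {m : ℕ} (hlo : ∑ i ∈ s, lo i ≤ m) (hhi : m ≤ ∑ i ∈ s, hi i) :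
    ∃ b : ι → ℕ, (∀ i, lo i ≤ b i ∧ b i ≤ hi i) ∧ ∑ i ∈ s, b i = m := by
  induction s using Finset.induction_on generalizing m with
  | empty => exact ⟨lo, fun i => ⟨le_rfl, hle i⟩, by simp_all⟩
  | insert a s ha ih =>
    rw [sum_insert ha] at hlo hhi
    -- give `a` as much as possible, leaving at least `∑ i ∈ s, lo i` for the rest
    obtain ⟨v, hv⟩ : ∃ v, v = min (hi a) (m - ∑ i ∈ s, lo i) := ⟨_, rfl⟩
    have hlo' : ∑ i ∈ s, lo i ≤ m - v := by omega
    have hhi' : m - v ≤ ∑ i ∈ s, hi i := by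
      have := sum_le_sum fun i (_ : i ∈ s) => hle i
      omega
    obtain ⟨b, hb, hbs⟩ := ih hlo' hhi'
    refine ⟨Function.update b a v, fun i => ?_, ?_⟩
    · rcases eq_or_ne i a with rfl | hia
      · simp only [Function.update_self]
        have := hle i
        omega
      · simpa only [Function.update_of_ne hia] using hb i
    · rw [sum_insert ha, sum_update_of_notMem ha, Function.update_self, hbs]
      omega

section Floor

variable {ι R : Type*} [Semiring R] [LinearOrder R] [IsStrictOrderedRing R] [FloorSemiring R]

theorem Nat.sum_floor_le {s : Finset ι} {x : ι → R} (hx : ∀ i ∈ s, 0 ≤ x i) {m : ℕ}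
    (hsum : ∑ i ∈ s, x i ≤ m) : ∑ i ∈ s, ⌊x i⌋₊ ≤ m := by
  have : ((∑ i ∈ s, ⌊x i⌋₊ : ℕ) : R) ≤ m := by
    push_cast
    exact (sum_le_sum fun i hi => Nat.floor_le (hx i hi)).trans hsum
  exact_mod_cast this

theorem Nat.le_sum_ceil {s : Finset ι} {x : ι → R} {m : ℕ} (hsum : (m : R) ≤ ∑ i ∈ s, x i) :
    m ≤ ∑ i ∈ s, ⌈x i⌉₊ := by
  have : (m : R) ≤ ((∑ i ∈ s, ⌈x i⌉₊ : ℕ) : R) := by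
    push_cast
    exact hsum.trans (sum_le_sum fun i _ => Nat.le_ceil (x i))
  exact_mod_cast this

end Floor

theorem abs_sub_lt_one_of_floor_le_of_le_ceil {R : Type*} [Ring R] [LinearOrder R]
    [IsStrictOrderedRing R] [FloorSemiring R] {x : R} (hx : 0 ≤ x) {b : ℕ} (hfloor : ⌊x⌋₊ ≤ b)
    (hceil : b ≤ ⌈x⌉₊) : |(b : R) - x| < 1 := by
  rw [abs_sub_lt_iff, sub_lt_iff_lt_add', sub_lt_iff_lt_add']
  constructor
  · exact (Nat.cast_le.mpr hceil).trans_lt (Nat.ceil_lt_add_one hx)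
  · exact (Nat.lt_floor_add_one x).trans_le (by gcongr)

theorem rounding_exists_general
    (n : ℕ) (total : ℕ)
    (frac : Fin n → ℝ) (hfrac_nonneg : ∀ i, 0 ≤ frac i) (hfrac_sum : ∑ i, frac i = 1)
    (avail : Fin n → ℕ)
    (havail : ∀ i, (total : ℝ) * frac i ≤ (avail i : ℝ)) :
    ∃ b : Fin n → ℕ,
      (∑ i, b i = total) ∧
      (∀ i, b i ≤ avail i) ∧
      (∀ i, |(b i : ℝ) - (total : ℝ) * frac i| < 1) := by
  set x : Fin n → ℝ := fun i => (total : ℝ) * frac i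
  have hx : ∀ i, 0 ≤ x i := fun i => mul_nonneg total.cast_nonneg (hfrac_nonneg i)
  have hsum : ∑ i, x i = total := by rw [← mul_sum, hfrac_sum, mul_one]
  obtain ⟨b, hb, hbsum⟩ := univ.exists_le_le_sum_eq (fun i => Nat.floor_le_ceil (x i))
    (Nat.sum_floor_le (fun i _ => hx i) hsum.le) (Nat.le_sum_ceil hsum.ge)
  exact ⟨b, hbsum, fun i => (hb i).2.trans (Nat.ceil_le.mpr (havail i)),
    fun i => abs_sub_lt_one_of_floor_le_of_le_ceil (hx i) (hb i).1 (hb i).2⟩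

/-- correctness of the Rounding procedure. Let `n ≥ 1`, let `total ∈ ℕ`,
let `frac ∈ ℝ^n` be nonnegative with `∑ frac_i = 1`, and let `avail ∈ ℕ^n` satisfy
`total ≤ ∑ avail_i` and `avail_i ≥ total·frac_i` for all `i`. Then there exists `b ∈ ℕ^n`
with `∑ b_i = total`, `b_i ≤ avail_i` for all `i`, and `|b_i − total·frac_i| < 1` for all
`i`; in particular the output of the Rounding procedure satisfies these properties. -/
theorem rounding_exists
    (n : ℕ) (hn : 1 ≤ n) (total : ℕ)
    (frac : Fin n → ℝ) (hfrac_nonneg : ∀ i, 0 ≤ frac i) (hfrac_sum : ∑ i, frac i = 1)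
    (avail : Fin n → ℕ) (htotal : total ≤ ∑ i, avail i)
    (havail : ∀ i, (total : ℝ) * frac i ≤ (avail i : ℝ)) :
    ∃ b : Fin n → ℕ,
      (∑ i, b i = total) ∧
      (∀ i, b i ≤ avail i) ∧
      (∀ i, |(b i : ℝ) - (total : ℝ) * frac i| < 1) :=
  rounding_exists_general n total frac hfrac_nonneg hfrac_sum avail havail
end
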